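/- arXiv:2206.05421 — 5 statements merged into one kernel-verified Lean document; each statement's English description precedes it below -/
import Mathlib

section
/- For any joint probability distribution P over variables V whose independence relation satisfies symmetry, decomposition, weak union, contraction, and intersection (a graphoid), and for any variable X and any subset Z of V not containing X, there exists a unique Markov boundary of X relative to Z, i.e., a unique minimal subset M of Z such that X is independent of Z \ M given M. -/
open Classical
attribute [local instance] Classical.propDecidable

variable {V : Type} [Fintype V] [DecidableEq V]

/-- A conditional independence model over variable set `V`:
`I A B C` means `A` is independent of `B` given `C`. -/
abbrev IndepModel (V : Type) :=
  Finset V → Finset V → Finset V → Prop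

/-- Semigraphoid axioms. -/
structure Semigraphoid (I : IndepModel V) : Prop where
  symm : ∀ A B C, I A B C → I B A C
  decomposition : ∀ A B W C, I A (B ∪ W) C → I A B C ∧ I A W C
  weakUnion : ∀ A B W C, I A (B ∪ W) C → I A B (C ∪ W)
  contraction : ∀ A B W C, I A B C → I A W (C ∪ B) → I A (B ∪ W) C

/-- Graphoid axioms. -/
structure Graphoid (I : IndepModel V) extends Semigraphoid I : Prop where
  intersection : ∀ A B W C, I A B (C ∪ W) → I A W (C ∪ B) → I A (B ∪ W) C

/-- Compositional graphoid axioms. -/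
structure CompGraphoid (I : IndepModel V) extends Graphoid I : Prop where
  composition : ∀ A B W C, I A B C → I A W C → I A (B ∪ W) C

/-- `M` is a Markov blanket of `X` relative to `Z`. -/
def MarkovBlanket (I : IndepModel V) (X : V) (Z M : Finset V) : Prop :=
  M ⊆ Z ∧ I {X} (Z \ M) M

/-- `M` is a Markov boundary (minimal Markov blanket) of `X` relative to `Z`. -/
def MarkovBoundary (I : IndepModel V) (X : V) (Z M : Finset V) : Prop :=
  MarkovBlanket I X Z M ∧ ∀ M' ⊂ M, ¬ I {X} (Z \ M') M'

/-- A directed graph on `V`, given by its finite set of directed edges. -/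
abbrev EdgeSet (V : Type) := Finset (V × V)

def Adj (E : EdgeSet V) (a b : V) : Prop := (a, b) ∈ E

/-- Acyclicity: no vertex reaches itself by a nontrivial directed path. -/
def IsDAG (E : EdgeSet V) : Prop := ∀ v, ¬ Relation.TransGen (Adj E) v v

def parents (E : EdgeSet V) (v : V) : Finset V :=
  (E.filter (fun e => e.2 = v)).image Prod.fst

def IsCollider (E : EdgeSet V) (x y z : V) : Prop := Adj E x y ∧ Adj E z y

/-- The middle vertex `y` of a path triple `x - y - z` does not block the path
given conditioning set `C`. -/
def ActiveTriple (E : EdgeSet V) (C : Finset V) (x y z : V) : Prop :=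
  (IsCollider E x y z ∧ ∃ d ∈ C, Relation.ReflTransGen (Adj E) y d) ∨
  (¬ IsCollider E x y z ∧ y ∉ C)

/-- `a` and `b` are d-connected given `C` in the graph `E`. -/
def DConn (E : EdgeSet V) (C : Finset V) (a b : V) : Prop :=
  ∃ p : List V, 2 ≤ p.length ∧ p.head? = some a ∧ p.getLast? = some b ∧
    (∀ (i : ℕ) (h : i + 1 < p.length),
      Adj E (p.get ⟨i, by omega⟩) (p.get ⟨i + 1, h⟩) ∨
      Adj E (p.get ⟨i + 1, h⟩) (p.get ⟨i, by omega⟩)) ∧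
    (∀ (i : ℕ) (h : i + 2 < p.length),
      ActiveTriple E C (p.get ⟨i, by omega⟩) (p.get ⟨i + 1, by omega⟩) (p.get ⟨i + 2, h⟩))

/-- `A` and `B` are d-separated given `C`. -/
def DSep (E : EdgeSet V) (A B C : Finset V) : Prop :=
  ∀ a ∈ A, ∀ b ∈ B, ¬ DConn E C a b

def PairwiseDisjoint3 (A B C : Finset V) : Prop :=
  Disjoint A B ∧ Disjoint A C ∧ Disjoint B C

/-- `I(G) ⊆ I(P)`: every d-separation of the graph is an independence of `I`. -/
def Markovian (E : EdgeSet V) (I : IndepModel V) : Prop :=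
  ∀ A B C, PairwiseDisjoint3 A B C → DSep E A B C → I A B C

/-- `I(P) ⊆ I(G)`: every independence of `I` is a d-separation of the graph. -/
def FaithfulTo (E : EdgeSet V) (I : IndepModel V) : Prop :=
  ∀ A B C, PairwiseDisjoint3 A B C → I A B C → DSep E A B C

/-- `I(E) ⊆ I(E')` : every d-separation statement of `E` holds in `E'`. -/
def ISub (E E' : EdgeSet V) : Prop :=
  ∀ A B C, PairwiseDisjoint3 A B C → DSep E A B C → DSep E' A B C

/-- Markov equivalence: same d-separation statements. -/
def MEquiv (E E' : EdgeSet V) : Prop := ISub E E' ∧ ISub E' E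

/-- Markovian DAGs. -/
def CMC (I : IndepModel V) : Set (EdgeSet V) := {G | IsDAG G ∧ Markovian G I}

/-- Faithful DAGs. -/
def CFC (I : IndepModel V) : Set (EdgeSet V) := {G | G ∈ CMC I ∧ FaithfulTo G I}

/-- SGS-minimal DAGs: Markovian with no Markovian proper subgraph. -/
def SGSmin (I : IndepModel V) : Set (EdgeSet V) :=
  {G | G ∈ CMC I ∧ ∀ G' ⊆ G, G' ∈ CMC I → G' = G}

/-- Frugal DAGs: Markovian with minimal edge count. -/
def Fr (I : IndepModel V) : Set (EdgeSet V) :=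
  {G | G ∈ CMC I ∧ ∀ G' ∈ CMC I, G.card ≤ G'.card}

/-- Uniquely frugal DAGs. -/
def uFr (I : IndepModel V) : Set (EdgeSet V) :=
  {G | G ∈ Fr I ∧ ∀ G' ∈ Fr I, MEquiv G' G}

/-- P-minimal DAGs: Markovian `G` such that no Markovian `G'` has `I(G) ⊊ I(G')`. -/
def Pm (I : IndepModel V) : Set (EdgeSet V) :=
  {G | G ∈ CMC I ∧ ∀ G' ∈ CMC I, ISub G G' → ISub G' G}

/-- Uniquely P-minimal DAGs. -/
def uPm (I : IndepModel V) : Set (EdgeSet V) :=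
  {G | G ∈ Pm I ∧ ∀ G' ∈ Pm I, MEquiv G' G}

/-- A list is a permutation of the vertices of `V`. -/
def IsPermList (π : List V) : Prop := π.Nodup ∧ ∀ v : V, v ∈ π

/-- The set of vertices preceding `k` in the permutation `π`. -/
def pre (π : List V) (k : V) : Finset V := (π.takeWhile (fun x => x != k)).toFinset

/-- The DAG induced from a permutation `π` by the Raskutti–Uhler (RU) construction:
`j → k` is an edge iff `j` precedes `k` in `π` and `X_j` is dependent on `X_k`
given all other predecessors of `k`. -/
noncomputable def RUedges (I : IndepModel V) (π : List V) : EdgeSet V :=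
  Finset.univ.filter
    (fun e => e.1 ∈ pre π e.2 ∧ ¬ I {e.1} {e.2} ((pre π e.2).erase e.1))

/-- `j → k` is a covered edge of `E`. -/
def CoveredEdge (E : EdgeSet V) (j k : V) : Prop :=
  (j, k) ∈ E ∧ parents E j = (parents E k).erase j

/-- `j → k` is a singular edge of `E`: no directed path from `j` to `k` other than
the edge itself. -/
def SingularEdge (E : EdgeSet V) (j k : V) : Prop :=
  (j, k) ∈ E ∧
    ∀ i, Relation.TransGen (Adj E) j i → Relation.TransGen (Adj E) i k → i = j ∨ i = k

/-- `π` is a causal order of the graph `E`: every ancestor of a vertex precedes it. -/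
def CausalOrder (E : EdgeSet V) (π : List V) : Prop :=
  IsPermList π ∧ ∀ a b, Relation.TransGen (Adj E) a b → π.idxOf a < π.idxOf b

/-- Two permutations differ by one adjacent transposition. -/
def AdjTrans (π τ : List V) : Prop :=
  ∃ (δ₁ δ₂ : List V) (a b : V), π = δ₁ ++ a :: b :: δ₂ ∧ τ = δ₁ ++ b :: a :: δ₂

/-- The non-descendants of `j` in the graph `E`. -/
noncomputable def nonDesc (E : EdgeSet V) (j : V) : Finset V :=
  Finset.univ.filter (fun i => ¬ Relation.ReflTransGen (Adj E) j i)


/-!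
Markov blankets of `X` relative to `Z` are closed under intersection: writing two blankets as
`M = C ∪ B` and `N = C ∪ W` with `C = M ∩ N`, the intersection axiom gives `X ⊥ B ∪ W | C`, and
contraction adds the rest of `Z`. Since `Z` itself is a blanket, a minimal blanket exists, and two
minimal blankets both equal their intersection.
-/

open Finset

section MarkovBlanket

variable {I : IndepModel V} {X : V} {Z M N : Finset V}

theorem MarkovBlanket.inter (hG : Graphoid I) (hM : MarkovBlanket I X Z M)
    (hN : MarkovBlanket I X Z N) : MarkovBlanket I X Z (M ∩ N) := by
  obtain ⟨hMZ, hMI⟩ := hM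
  obtain ⟨hNZ, hNI⟩ := hN
  refine ⟨inter_subset_left.trans hMZ, ?_⟩
  set C := M ∩ N
  set B := M \ N
  set W := N \ M
  set R := Z \ (M ∪ N)
  have hM' : I {X} (R ∪ W) (C ∪ B) := by
    convert hMI using 2 <;> ext x <;> grind
  have hN' : I {X} (B ∪ R) (C ∪ W) := by
    convert hNI using 2 <;> ext x <;> grind
  have hW : I {X} W (C ∪ B) := (hG.decomposition _ _ _ _ hM').2
  have hB : I {X} B (C ∪ W) := (hG.decomposition _ _ _ _ hN').1
  have hR : I {X} R (C ∪ (B ∪ W)) := by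
    simpa only [union_assoc] using hG.weakUnion _ _ _ _ hM'
  have hBW : I {X} (B ∪ W) C := hG.intersection _ _ _ _ hB hW
  convert hG.contraction _ _ _ _ hBW hR using 2
  ext x
  grind

theorem markovBoundary_iff_minimal :
    MarkovBoundary I X Z M ↔ Minimal (MarkovBlanket I X Z) M := by
  refine ⟨fun ⟨hM, hmin⟩ => ⟨hM, fun N hN hNM => ?_⟩, fun h => ⟨h.prop, fun N hNM hN => ?_⟩⟩
  · by_contra hMN
    exact hmin N (ssubset_of_subset_not_subset hNM hMN) hN.2
  · exact h.not_prop_of_lt hNM ⟨hNM.subset.trans h.prop.1, hN⟩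

end MarkovBlanket

theorem unique_markov_boundary_general (I : IndepModel V) (hG : Graphoid I)
    (htriv : ∀ A C : Finset V, I A ∅ C)
    (X : V) (Z : Finset V) :
    ∃! M : Finset V, MarkovBoundary I X Z M := by
  simp only [markovBoundary_iff_minimal]
  have hZ : MarkovBlanket I X Z Z := ⟨subset_rfl, by simpa using htriv {X} Z⟩
  obtain ⟨M, hM⟩ := exists_minimal_of_wellFoundedLT _ ⟨Z, hZ⟩
  refine ⟨M, hM, fun N hN => ?_⟩
  have hNM : MarkovBlanket I X Z (N ∩ M) := hN.prop.inter hG hM.prop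
  exact (hN.eq_of_le hNM inter_subset_left).symm.trans (hM.eq_of_le hNM inter_subset_right)

/-- For a graphoid, there is a unique Markov boundary of `X` relative to
any `Z ⊆ V \ {X}` (trivial independencies `A ⊥ ∅ | C` hold in any distribution). -/
theorem unique_markov_boundary (I : IndepModel V) (hG : Graphoid I)
    (htriv : ∀ A C : Finset V, I A ∅ C)
    (X : V) (Z : Finset V) (hXZ : X ∉ Z) :
    ∃! M : Finset V, MarkovBoundary I X Z M :=
  unique_markov_boundary_general I hG htriv X Z
end

section
/- Let P be a graphoid over V. If M is any Markov blanket of X relative to Z ⊆ V \ {X}, then the unique Markov boundary MB(X, Z) is a subset of M. -/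
open Classical
attribute [local instance] Classical.propDecidable

variable {V : Type} [Fintype V] [DecidableEq V]

/-!
Under the intersection axiom, the intersection of two Markov blankets is again a Markov blanket.
So if the boundary `Mb` were not inside a blanket `M`, then `M ∩ Mb` would be a blanket strictly
smaller than `Mb`, contradicting minimality.
-/

/-- The graphoid step behind `MarkovBlanket.inter`, for `M₁ = C ∪ A`, `M₂ = C ∪ B` and
`R = Z \ (M₁ ∪ M₂)`. -/
theorem Graphoid.indep_union_of_indep_union {α : Type} [DecidableEq α] {I : IndepModel α}
    (hG : Graphoid I) {S A B C R : Finset α} (h₁ : I S (R ∪ B) (C ∪ A))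
    (h₂ : I S (R ∪ A) (C ∪ B)) :
    I S (A ∪ B ∪ R) C := by
  have hB : I S B (C ∪ A) := (hG.decomposition S R B _ h₁).2
  have hA : I S A (C ∪ B) := (hG.decomposition S R A _ h₂).2
  have hAB : I S (A ∪ B) C := hG.intersection S A B C hA hB
  have hR : I S R (C ∪ (A ∪ B)) := by
    simpa only [Finset.union_assoc] using hG.weakUnion S R B (C ∪ A) h₁
  exact hG.contraction S (A ∪ B) R C hAB hR

theorem MarkovBlanket.inter_s1 {α : Type} [DecidableEq α] {I : IndepModel α} (hG : Graphoid I)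
    {X : α} {Z M₁ M₂ : Finset α} (h₁ : MarkovBlanket I X Z M₁) (h₂ : MarkovBlanket I X Z M₂) :
    MarkovBlanket I X Z (M₁ ∩ M₂) := by
  obtain ⟨hsub₁, hind₁⟩ := h₁
  obtain ⟨hsub₂, hind₂⟩ := h₂
  refine ⟨Finset.inter_subset_left.trans hsub₁, ?_⟩
  have hZ₁ : Z \ M₁ = Z \ (M₁ ∪ M₂) ∪ M₂ \ M₁ := by
    ext x; have := @hsub₂ x; simp only [Finset.mem_sdiff, Finset.mem_union]; tauto
  have hZ₂ : Z \ M₂ = Z \ (M₁ ∪ M₂) ∪ M₁ \ M₂ := by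
    ext x; have := @hsub₁ x; simp only [Finset.mem_sdiff, Finset.mem_union]; tauto
  have hZ : Z \ (M₁ ∩ M₂) = M₁ \ M₂ ∪ M₂ \ M₁ ∪ Z \ (M₁ ∪ M₂) := by
    ext x; have := @hsub₁ x; have := @hsub₂ x
    simp only [Finset.mem_sdiff, Finset.mem_union, Finset.mem_inter]; tauto
  have h₁ : I {X} (Z \ (M₁ ∪ M₂) ∪ M₂ \ M₁) (M₁ ∩ M₂ ∪ M₁ \ M₂) := by
    rwa [← hZ₁, Finset.union_comm, Finset.sdiff_union_inter]
  have h₂ : I {X} (Z \ (M₁ ∪ M₂) ∪ M₁ \ M₂) (M₁ ∩ M₂ ∪ M₂ \ M₁) := by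
    rwa [← hZ₂, Finset.inter_comm, Finset.union_comm, Finset.sdiff_union_inter]
  rw [hZ]
  exact hG.indep_union_of_indep_union h₁ h₂

theorem MarkovBoundary.eq_of_blanket_subset {α : Type} [DecidableEq α] {I : IndepModel α}
    {X : α} {Z M Mb : Finset α} (hMb : MarkovBoundary I X Z Mb) (hM : MarkovBlanket I X Z M)
    (hsub : M ⊆ Mb) : M = Mb := by
  by_contra hne
  exact hMb.2 M (Finset.ssubset_iff_subset_ne.mpr ⟨hsub, hne⟩) hM.2

theorem markov_boundary_subset_blanket_general (I : IndepModel V) (hG : Graphoid I)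
    (X : V) (Z : Finset V) (M Mb : Finset V)
    (hM : MarkovBlanket I X Z M) (hMb : MarkovBoundary I X Z Mb) :
    Mb ⊆ M := by
  rw [← hMb.eq_of_blanket_subset (hM.inter_s1 hG hMb.1) Finset.inter_subset_right]
  exact Finset.inter_subset_left

/-- the Markov boundary is contained in every Markov blanket. -/
theorem markov_boundary_subset_blanket (I : IndepModel V) (hG : Graphoid I)
    (X : V) (Z : Finset V) (hXZ : X ∉ Z) (M Mb : Finset V)
    (hM : MarkovBlanket I X Z M) (hMb : MarkovBoundary I X Z Mb) :
    Mb ⊆ M :=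
  markov_boundary_subset_blanket_general I hG X Z M Mb hM hMb
end

section
/- Let P be a graphoid over V and let H be a DAG that is Markovian with respect to P (every d-separation in H is an independence in P). If π is a causal order of H (every ancestor of j in H precedes j in π), then the edge set of the DAG G_π induced from π by the RU construction is a subset of the edge set of H. Moreover, if H is SGS-minimal (no proper subgraph of H is Markovian), then G_π = H. -/
open Classical
attribute [local instance] Classical.propDecidable

variable {V : Type} [Fintype V] [DecidableEq V]

/-!
If `j` precedes `k` in a causal order of `H` but `j → k` is not an edge of `H`, the other
predecessors of `k` contain all parents of `k` and no descendant of `k`, so they d-separate `k`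
from `j` in `H`. As `H` is Markovian, `j` and `k` are then independent given them, i.e. `j → k` is
not an RU edge.

If `H` is SGS-minimal, it remains to see that the RU graph, a subgraph of `H`, is Markovian. By
the intersection axiom, the pairwise independences behind its non-edges combine into the ordered
Markov property `v ⊥ Pre(v) \ pa(v) | pa(v)`. For a semigraphoid this implies the global
Markov property (Verma–Pearl): adding the vertices in the order `π`, each new vertex `v` is a
sink, and a d-separation involving `v` is reduced by contraction and weak union to
d-separations among the earlier vertices.
-/

section DSeparation

variable {V : Type} {E E' : EdgeSet V} {C : Finset V}

theorem IsDAG.not_adj_of_adj (hE : IsDAG E) {a b : V} (h : Adj E a b) : ¬ Adj E b a :=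
  fun h' => hE a (.tail (.single h) h')

theorem IsDAG.anti (hE' : IsDAG E') (hsub : E ⊆ E') : IsDAG E :=
  fun v hv => hE' v (Relation.TransGen.mono (fun _ _ h => hsub h) _ _ hv)

def Linked (E : EdgeSet V) (x y : V) : Prop := Adj E x y ∨ Adj E y x

theorem Linked.symm {x y : V} (h : Linked E x y) : Linked E y x := Or.symm h

theorem Linked.mono (hsub : E ⊆ E') {x y : V} (h : Linked E x y) : Linked E' x y :=
  h.imp (@hsub _) (@hsub _)

theorem ActiveTriple.symm {x y z : V} (h : ActiveTriple E C x y z) : ActiveTriple E C z y x := by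
  rcases h with ⟨⟨hxy, hzy⟩, hd⟩ | ⟨hn, hy⟩
  · exact .inl ⟨⟨hzy, hxy⟩, hd⟩
  · exact .inr ⟨fun hc => hn ⟨hc.2, hc.1⟩, hy⟩

def IsActivePath (E : EdgeSet V) (C : Finset V) : List V → Prop
  | x :: y :: z :: t => Linked E x y ∧ ActiveTriple E C x y z ∧ IsActivePath E C (y :: z :: t)
  | [x, y] => Linked E x y
  | _ => False

theorem IsActivePath.linked_head : ∀ {x y : V} {t : List V},
    IsActivePath E C (x :: y :: t) → Linked E x y
  | _, _, [], h => h
  | _, _, _ :: _, h => h.1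

theorem isActivePath_iff_getElem : ∀ {p : List V}, IsActivePath E C p ↔ 2 ≤ p.length ∧
    (∀ i (h : i + 1 < p.length), Linked E p[i] p[i + 1]) ∧
    (∀ i (h : i + 2 < p.length), ActiveTriple E C p[i] p[i + 1] p[i + 2])
  | [] => by simp [IsActivePath]
  | [_] => by simp [IsActivePath]
  | [x, y] => by
    refine ⟨fun h => ⟨le_rfl, fun i hi => ?_, fun i hi => ?_⟩, fun h => h.2.1 0 (by simp)⟩
    · obtain rfl : i = 0 := by simp only [List.length_cons, List.length_nil] at hi; omega
      exact h
    · simp at hi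
  | x :: y :: z :: t => by
    rw [IsActivePath, isActivePath_iff_getElem]
    constructor
    · rintro ⟨hxy, hxyz, -, hl, ht⟩
      refine ⟨by simp, fun i hi => ?_, fun i hi => ?_⟩
      · cases i with
        | zero => exact hxy
        | succ i => exact hl i (by simp only [List.length_cons] at hi ⊢; omega)
      · cases i with
        | zero => exact hxyz
        | succ i => exact ht i (by simp only [List.length_cons] at hi ⊢; omega)
    · rintro ⟨-, hl, ht⟩
      exact ⟨hl 0 (by simp), ht 0 (by simp), by simp,
        fun i hi => hl (i + 1) (by simp only [List.length_cons] at hi ⊢; omega),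
        fun i hi => ht (i + 1) (by simp only [List.length_cons] at hi ⊢; omega)⟩

theorem dConn_iff {a b : V} : DConn E C a b ↔
    ∃ y t, IsActivePath E C (a :: y :: t) ∧ (y :: t).getLast? = some b := by
  constructor
  · rintro ⟨p, hlen, ha, hb, hl, ht⟩
    obtain ⟨a', y, t, rfl⟩ : ∃ a' y t, p = a' :: y :: t := by
      match p, hlen with
      | a' :: y :: t, _ => exact ⟨a', y, t, rfl⟩
    obtain rfl : a' = a := by simpa using ha
    exact ⟨y, t, isActivePath_iff_getElem.mpr ⟨hlen, hl, ht⟩, by simpa using hb⟩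
  · rintro ⟨y, t, hp, hb⟩
    obtain ⟨hlen, hl, ht⟩ := isActivePath_iff_getElem.mp hp
    exact ⟨a :: y :: t, hlen, rfl, by simpa using hb, hl, ht⟩

theorem IsActivePath.reverse {p : List V} (hp : IsActivePath E C p) :
    IsActivePath E C p.reverse := by
  obtain ⟨hlen, hl, ht⟩ := isActivePath_iff_getElem.mp hp
  refine isActivePath_iff_getElem.mpr ⟨by simpa using hlen, fun i hi => ?_, fun i hi => ?_⟩
  · simp only [List.length_reverse] at hi
    simp only [List.getElem_reverse]
    have := (hl (p.length - 2 - i) (by omega)).symm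
    grind
  · simp only [List.length_reverse] at hi
    simp only [List.getElem_reverse]
    have := (ht (p.length - 3 - i) (by omega)).symm
    grind

theorem DConn.symm {a b : V} (h : DConn E C a b) : DConn E C b a := by
  obtain ⟨p, hlen, ha, hb, hl, ht⟩ := h
  obtain ⟨hlen', hl', ht'⟩ :=
    isActivePath_iff_getElem.mp (isActivePath_iff_getElem.mpr ⟨hlen, hl, ht⟩).reverse
  exact ⟨p.reverse, hlen', by simpa using hb, by simpa using ha, hl', ht'⟩

theorem DSep.symm {A B : Finset V} (h : DSep E A B C) : DSep E B A C :=
  fun b hb a ha hab => h a ha b hb hab.symm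

theorem DConn.of_linked {a b : V} (h : Linked E a b) : DConn E C a b :=
  dConn_iff.mpr ⟨b, [], h, rfl⟩

theorem ActiveTriple.mono (hsub : E ⊆ E') (hE' : IsDAG E') {x y z : V}
    (hxy : Linked E x y) (hyz : Linked E y z) (h : ActiveTriple E C x y z) :
    ActiveTriple E' C x y z := by
  rcases h with ⟨⟨hxy', hzy'⟩, d, hd, hyd⟩ | ⟨hn, hy⟩
  · exact .inl ⟨⟨hsub hxy', hsub hzy'⟩, d, hd,
      Relation.ReflTransGen.mono (fun _ _ h => hsub h) _ _ hyd⟩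
  · refine .inr ⟨fun ⟨hxy', hzy'⟩ => hn ⟨?_, ?_⟩, hy⟩
    · exact hxy.resolve_right fun hyx => hE'.not_adj_of_adj (hsub hyx) hxy'
    · exact hyz.resolve_left fun hyz => hE'.not_adj_of_adj (hsub hyz) hzy'

theorem IsActivePath.mono (hsub : E ⊆ E') (hE' : IsDAG E') :
    ∀ {p : List V}, IsActivePath E C p → IsActivePath E' C p
  | [_, _], h => Linked.mono hsub h
  | _ :: _ :: _ :: _, ⟨hxy, hxyz, h⟩ =>
    ⟨hxy.mono hsub, hxyz.mono hsub hE' hxy h.linked_head, h.mono hsub hE'⟩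

theorem DConn.mono (hsub : E ⊆ E') (hE' : IsDAG E') {a b : V} (h : DConn E C a b) :
    DConn E' C a b := by
  obtain ⟨y, t, hp, hb⟩ := dConn_iff.mp h
  exact dConn_iff.mpr ⟨y, t, hp.mono hsub hE', hb⟩

theorem DConn.cons_of_adj (hE : IsDAG E) {y v b : V} (hyv : Adj E y v) (hy : y ∉ C)
    (h : DConn E C y b) : DConn E C v b := by
  obtain ⟨z, t, hp, hb⟩ := dConn_iff.mp h
  exact dConn_iff.mpr
    ⟨y, z :: t, ⟨.inr hyv, .inr ⟨fun hc => hE.not_adj_of_adj hyv hc.1, hy⟩, hp⟩, hb⟩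

theorem DConn.of_reflTransGen (hE : IsDAG E) {y w b : V}
    (hy : ∀ c ∈ C, ¬ Relation.ReflTransGen (Adj E) y c)
    (hyw : Relation.ReflTransGen (Adj E) y w)
    (h : DConn E C y b) : DConn E C w b := by
  induction hyw with
  | refl => exact h
  | tail hyu huw ih => exact ih.cons_of_adj hE huw fun hu => hy _ hu hyu

theorem IsActivePath.transGen_of_adj_head {k : V}
    (hC : ∀ c ∈ C, ¬ Relation.TransGen (Adj E) k c) : ∀ {x y b : V} {t : List V},
    Adj E x y → Relation.TransGen (Adj E) k y → IsActivePath E C (x :: y :: t) →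
      (y :: t).getLast? = some b → Relation.TransGen (Adj E) k b
  | _, _, _, [], _, hky, _, hb => Option.some.inj hb ▸ hky
  | _, y, _, z :: _, hxy, hky, ⟨_, hxyz, h⟩, hb => by
    rcases hxyz with ⟨-, d, hd, hyd⟩ | ⟨hn, -⟩
    · exact absurd (hky.trans_left hyd) (hC d hd)
    · have hyz : Adj E y z := h.linked_head.resolve_right fun hzy => hn ⟨hxy, hzy⟩
      exact h.transGen_of_adj_head hC hyz (hky.tail hyz) hb

theorem not_dConn_of_parents_mem (hE : IsDAG E) {k j : V} (hpa : ∀ y, Adj E y k → y ∈ C)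
    (hC : ∀ c ∈ C, ¬ Relation.TransGen (Adj E) k c) (hkj : ¬ Relation.TransGen (Adj E) k j)
    (hjk : ¬ Adj E j k) : ¬ DConn E C k j := by
  intro h
  obtain ⟨y, t, hp, hb⟩ := dConn_iff.mp h
  rcases hp.linked_head with hky | hyk
  · exact hkj (hp.transGen_of_adj_head hC hky (.single hky) hb)
  · rcases t with _ | ⟨z, t⟩
    · exact hjk (Option.some.inj hb ▸ hyk)
    · rcases hp.2.1 with ⟨⟨hky, -⟩, -⟩ | ⟨-, hy⟩
      · exact hE.not_adj_of_adj hyk hky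
      · exact hy (hpa y hyk)

variable [DecidableEq V]

theorem IsActivePath.union_cases (hE : IsDAG E) {W : Finset V} : ∀ {x y b : V} {t : List V},
    IsActivePath E (C ∪ W) (x :: y :: t) → (y :: t).getLast? = some b →
    IsActivePath E C (x :: y :: t) ∨ ∃ w ∈ W, DConn E C w b
  | _, _, _, [], h, _ => .inl h
  | x, y, b, z :: t, ⟨hxy, hxyz, hp⟩, hb => by
    rcases hp.union_cases hE hb with hp' | hw
    · by_cases hxyz' : ActiveTriple E C x y z
      · exact .inl ⟨hxy, hxyz', hp'⟩
      -- `y` is a collider without descendants in `C`: reroute from its descendant in `W`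
      rcases hxyz with ⟨hcol, d, hd, hyd⟩ | ⟨hn, hy⟩
      · have hyC : ∀ c ∈ C, ¬ Relation.ReflTransGen (Adj E) y c :=
          fun c hc hyc => hxyz' (.inl ⟨hcol, c, hc, hyc⟩)
        have hdW : d ∈ W := (Finset.mem_union.mp hd).resolve_left fun hdC => hyC d hdC hyd
        exact .inr ⟨d, hdW, (dConn_iff.mpr ⟨z, t, hp', hb⟩).of_reflTransGen hE hyC hyd⟩
      · exact absurd (.inr ⟨hn, fun hyC => hy (Finset.mem_union_left _ hyC)⟩) hxyz'
    · exact .inr hw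

theorem DConn.union_cases (hE : IsDAG E) {W : Finset V} {a b : V} (h : DConn E (C ∪ W) a b) :
    DConn E C a b ∨ ∃ w ∈ W, DConn E C w b := by
  obtain ⟨y, t, hp, hb⟩ := dConn_iff.mp h
  exact (hp.union_cases hE hb).imp_left fun hp' => dConn_iff.mpr ⟨y, t, hp', hb⟩

section Sink

variable {v : V} (hv : ∀ w, ¬ Adj E v w)
include hv

theorem ActiveTriple.insert_sink (hvC : v ∉ C) {x y z : V} (hxy : Linked E x y)
    (hyz : Linked E y z) (h : ActiveTriple E C x y z) : ActiveTriple E (insert v C) x y z := by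
  rcases h with ⟨hcol, d, hd, hyd⟩ | ⟨hn, hy⟩
  · exact .inl ⟨hcol, d, Finset.mem_insert_of_mem hd, hyd⟩
  · refine .inr ⟨hn, fun hy' => ?_⟩
    obtain rfl | hyC := Finset.mem_insert.mp hy'
    · exact hn ⟨hxy.resolve_right (hv x), hyz.resolve_left (hv z)⟩
    · exact hy hyC

theorem IsActivePath.insert_sink (hvC : v ∉ C) :
    ∀ {p : List V}, IsActivePath E C p → IsActivePath E (insert v C) p
  | [_, _], h => h
  | _ :: _ :: _ :: _, ⟨hxy, hxyz, h⟩ =>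
    ⟨hxy, hxyz.insert_sink hv hvC hxy h.linked_head, h.insert_sink hvC⟩

theorem DConn.insert_sink (hvC : v ∉ C) {a b : V} (h : DConn E C a b) :
    DConn E (insert v C) a b := by
  obtain ⟨y, t, hp, hb⟩ := dConn_iff.mp h
  exact dConn_iff.mpr ⟨y, t, hp.insert_sink hv hvC, hb⟩

theorem IsActivePath.append_sink (hvC : v ∉ C) {z : V} {r : List V} :
    ∀ {x y : V} {t : List V}, IsActivePath E C (x :: y :: t) → (y :: t).getLast? = some v →
      IsActivePath E C (v :: z :: r) → IsActivePath E (insert v C) (x :: y :: t ++ z :: r)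
  | x, _, [], h, hy, hq => by
    obtain rfl := Option.some.inj hy
    exact ⟨h, .inl ⟨⟨h.resolve_right (hv x), hq.linked_head.resolve_left (hv z)⟩, _,
      Finset.mem_insert_self _ _, .refl⟩, hq.insert_sink hv hvC⟩
  | _, _, _ :: _, ⟨hxy, hxyw, h⟩, hy, hq =>
    ⟨hxy, hxyw.insert_sink hv hvC hxy h.linked_head, h.append_sink hvC hy hq⟩

theorem DConn.trans_sink (hvC : v ∉ C) {a b : V} (hav : DConn E C a v) (hvb : DConn E C v b) :
    DConn E (insert v C) a b := by
  obtain ⟨y, t, hp, hy⟩ := dConn_iff.mp hav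
  obtain ⟨z, r, hq, hb⟩ := dConn_iff.mp hvb
  refine dConn_iff.mpr ⟨y, t ++ z :: r, hp.append_sink hv hvC hy hq, ?_⟩
  rwa [← List.cons_append, List.getLast?_append_cons]

end Sink

end DSeparation

section Semigraphoid

variable {V : Type} [DecidableEq V] {I : IndepModel V}

theorem Semigraphoid.mono_right (hI : Semigraphoid I) {A B B' C : Finset V} (h : I A B C)
    (hB : B' ⊆ B) : I A B' C :=
  (hI.decomposition A B' (B \ B') C (by rwa [Finset.union_sdiff_of_subset hB])).1

theorem Graphoid.indep_sdiff_of_forall_mem (hI : Graphoid I) {A P S : Finset V} (hSP : S ⊆ P)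
    (h0 : I A ∅ P) (h : ∀ j ∈ S, I A {j} (P.erase j)) : I A S (P \ S) := by
  induction S using Finset.induction_on with
  | empty => simpa using h0
  | @insert j S hjS ih =>
    have hjP : j ∈ P := hSP (Finset.mem_insert_self j S)
    have hS : I A S (P \ insert j S ∪ {j}) := by
      convert ih ((Finset.subset_insert j S).trans hSP)
        (fun i hi => h i (Finset.mem_insert_of_mem hi)) using 1
      grind
    have hj : I A {j} (P \ insert j S ∪ S) := by
      convert h j (Finset.mem_insert_self j S) using 1
      grind
    simpa [Finset.union_comm, ← Finset.insert_eq] using hI.intersection A S {j} _ hS hj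

end Semigraphoid

section OrderedMarkov

variable {V : Type} {I : IndepModel V} {E : EdgeSet V}

def MarkovianOn (E : EdgeSet V) (I : IndepModel V) (U : Finset V) : Prop :=
  ∀ A B C, A ⊆ U → B ⊆ U → C ⊆ U → PairwiseDisjoint3 A B C → DSep E A B C →
    I A B C

theorem MarkovianOn.mono {E' : EdgeSet V} {U : Finset V} (hsub : E ⊆ E') (hE' : IsDAG E')
    (h : MarkovianOn E I U) : MarkovianOn E' I U :=
  fun A B C hA hB hC hABC hd =>
    h A B C hA hB hC hABC fun a ha b hb hab => hd a ha b hb (hab.mono hsub hE')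

theorem Markovian.indep_empty (hE : Markovian E I) {A C : Finset V} (hAC : Disjoint A C) :
    I A ∅ C :=
  hE A ∅ C ⟨Finset.disjoint_empty_right A, hAC, Finset.disjoint_empty_left C⟩
    fun _ _ _ hb => absurd hb (Finset.notMem_empty _)

variable [DecidableEq V]

theorem mem_parents {v j : V} : j ∈ parents E v ↔ Adj E j v := by
  simp [parents, Adj]

section InsertSink

variable {U : Finset V} {v : V} (hI : Semigraphoid I) (hE : IsDAG E)
  (hpa : parents E v ⊆ U) (hom : I {v} (U \ parents E v) (parents E v)) (h : MarkovianOn E I U)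
include hI hE hpa hom h

theorem MarkovianOn.indep_singleton {B S : Finset V} (hB : B ⊆ U) (hS : S ⊆ U)
    (hBS : Disjoint B S) (hd : DSep E {v} B S) : I {v} B S := by
  set L := parents E v
  have hLB : Disjoint L B := Finset.disjoint_left.mpr fun l hl hlB =>
    hd v (Finset.mem_singleton_self v) l hlB (.of_linked (.inr (mem_parents.mp hl)))
  have hLS : I (L \ S) B S := by
    refine h _ _ _ (Finset.sdiff_subset.trans hpa) hB hS
      ⟨hLB.mono_left Finset.sdiff_subset, Finset.sdiff_disjoint, hBS⟩ fun l hl b hb hlb => ?_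
    obtain ⟨hlL, hlS⟩ := Finset.mem_sdiff.mp hl
    exact hd v (Finset.mem_singleton_self v) b hb (hlb.cons_of_adj hE (mem_parents.mp hlL) hlS)
  have hvB : I {v} B (L ∪ S) := by
    have hsub : B ∪ S \ L ⊆ U \ L := by grind [Finset.disjoint_left]
    simpa [Finset.union_sdiff_self_eq_union] using hI.weakUnion _ _ _ _ (hI.mono_right hom hsub)
  have hBv : I B (L \ S ∪ {v}) S :=
    hI.contraction B _ _ S (hI.symm _ _ _ hLS) (by
      rw [Finset.union_sdiff_self_eq_union, Finset.union_comm]; exact hI.symm _ _ _ hvB)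
  exact hI.symm _ _ _ (hI.mono_right hBv Finset.subset_union_right)

theorem MarkovianOn.indep_of_mem_left {A B C : Finset V} (hA : A ⊆ insert v U) (hB : B ⊆ U)
    (hC : C ⊆ U) (hABC : PairwiseDisjoint3 A B C) (hd : DSep E A B C) (hvA : v ∈ A) :
    I A B C := by
  set A' := A.erase v
  have hA' : A' ⊆ U := Finset.subset_insert_iff.mp hA
  have hA'BC : I A' B C :=
    h A' B C hA' hB hC ⟨hABC.1.mono_left (Finset.erase_subset v A),
      hABC.2.1.mono_left (Finset.erase_subset v A), hABC.2.2⟩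
      fun a ha => hd a (Finset.mem_of_mem_erase ha)
  have hvB : I {v} B (C ∪ A') := by
    refine h.indep_singleton hI hE hpa hom hB (Finset.union_subset hC hA')
      (Finset.disjoint_union_right.mpr
        ⟨hABC.2.2, (hABC.1.mono_left (Finset.erase_subset v A)).symm⟩)
      fun a ha b hb hab => ?_
    obtain rfl := Finset.mem_singleton.mp ha
    rcases hab.union_cases hE with hab | ⟨w, hw, hwb⟩
    · exact hd a hvA b hb hab
    · exact hd w (Finset.mem_of_mem_erase hw) b hb hwb
  have := hI.contraction B A' {v} C (hI.symm _ _ _ hA'BC) (hI.symm _ _ _ hvB)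
  rw [Finset.union_comm, ← Finset.insert_eq, Finset.insert_erase hvA] at this
  exact hI.symm _ _ _ this

theorem MarkovianOn.indep_of_mem_cond (hv : ∀ w, ¬ Adj E v w) {A B C : Finset V} (hA : A ⊆ U)
    (hB : B ⊆ U) (hC : C ⊆ insert v U) (hABC : PairwiseDisjoint3 A B C) (hd : DSep E A B C)
    (hvC : v ∈ C) (hvB : ∀ b ∈ B, ¬ DConn E (C.erase v) v b) : I A B C := by
  set C' := C.erase v
  have hC' : C' ⊆ U := Finset.subset_insert_iff.mp hC
  have hd' : DSep E A B C' := fun a ha b hb hab => by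
    have := hab.insert_sink hv (Finset.notMem_erase v C)
    rw [Finset.insert_erase hvC] at this
    exact hd a ha b hb this
  have hABC' : I A B C' :=
    h A B C' hA hB hC' ⟨hABC.1, hABC.2.1.mono_right (Finset.erase_subset v C),
      hABC.2.2.mono_right (Finset.erase_subset v C)⟩ hd'
  have hvB : I {v} B (C' ∪ A) := by
    refine h.indep_singleton hI hE hpa hom hB (Finset.union_subset hC' hA)
      (Finset.disjoint_union_right.mpr
        ⟨hABC.2.2.mono_right (Finset.erase_subset v C), hABC.1.symm⟩)
      fun a ha b hb hab => ?_
    obtain rfl := Finset.mem_singleton.mp ha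
    rcases hab.union_cases hE with hab | ⟨w, hw, hwb⟩
    · exact hvB b hb hab
    · exact hd' w hw b hb hwb
  have := hI.weakUnion B A {v} C'
    (hI.contraction B A {v} C' (hI.symm _ _ _ hABC') (hI.symm _ _ _ hvB))
  rw [Finset.union_comm, ← Finset.insert_eq, Finset.insert_erase hvC] at this
  exact hI.symm _ _ _ this

theorem MarkovianOn.insert_sink (hv : ∀ w, ¬ Adj E v w) : MarkovianOn E I (insert v U) := by
  intro A B C hA hB hC hABC hd
  have hsymm : PairwiseDisjoint3 B A C := ⟨hABC.1.symm, hABC.2.2, hABC.2.1⟩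
  have hU {X : Finset V} (hX : X ⊆ insert v U) (hvX : v ∉ X) : X ⊆ U :=
    (Finset.subset_insert_iff_of_notMem hvX).mp hX
  by_cases hvA : v ∈ A
  · have hvB : v ∉ B := Finset.disjoint_left.mp hABC.1 hvA
    have hvC : v ∉ C := Finset.disjoint_left.mp hABC.2.1 hvA
    exact h.indep_of_mem_left hI hE hpa hom hA (hU hB hvB) (hU hC hvC) hABC hd hvA
  by_cases hvB : v ∈ B
  · have hvC : v ∉ C := Finset.disjoint_left.mp hABC.2.2 hvB
    exact hI.symm _ _ _
      (h.indep_of_mem_left hI hE hpa hom hB (hU hA hvA) (hU hC hvC) hsymm hd.symm hvB)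
  by_cases hvC : v ∈ C
  · by_cases hvB' : ∀ b ∈ B, ¬ DConn E (C.erase v) v b
    · exact h.indep_of_mem_cond hI hE hpa hom hv (hU hA hvA) (hU hB hvB) hC hABC hd hvC hvB'
    -- `v` is a collider, so it cannot be d-connected to both `A` and `B`
    push Not at hvB'
    obtain ⟨b, hb, hvb⟩ := hvB'
    refine hI.symm _ _ _ (h.indep_of_mem_cond hI hE hpa hom hv (hU hB hvB) (hU hA hvA) hC hsymm
      hd.symm hvC fun a ha hva => hd a ha b hb ?_)
    have := hva.symm.trans_sink hv (Finset.notMem_erase v C) hvb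
    rwa [Finset.insert_erase hvC] at this
  exact h A B C (hU hA hvA) (hU hB hvB) (hU hC hvC) hABC hd

end InsertSink

end OrderedMarkov

section PermutationOrder

variable {V : Type} [DecidableEq V] {π : List V}

theorem pre_eq_toFinset_take (π : List V) (k : V) :
    pre π k = (π.take (π.idxOf k)).toFinset := by
  simp [pre, List.takeWhile_eq_take_findIdx_not, List.idxOf, bne]

theorem IsPermList.mem_pre_iff (hπ : IsPermList π) {x k : V} :
    x ∈ pre π k ↔ π.idxOf x < π.idxOf k := by
  rw [pre_eq_toFinset_take, List.mem_toFinset, List.mem_take_iff_idxOf_lt (hπ.2 x)]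

theorem IsPermList.pre_getElem (hπ : IsPermList π) {m : ℕ} (hm : m < π.length) :
    pre π π[m] = (π.take m).toFinset := by
  rw [pre_eq_toFinset_take, hπ.1.idxOf_getElem]

theorem toFinset_take_succ {m : ℕ} (hm : m < π.length) :
    (π.take (m + 1)).toFinset = insert π[m] (π.take m).toFinset := by
  rw [List.take_add_one, List.getElem?_eq_getElem hm, Option.toList_some, List.toFinset_append]
  ext x
  simp [or_comm]

theorem notMem_pre_self (π : List V) (k : V) : k ∉ pre π k := by
  intro h
  simpa using List.mem_takeWhile_imp (List.mem_toFinset.mp h)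

theorem CausalOrder.dSep_pre_erase {H : EdgeSet V} (hH : IsDAG H) (hco : CausalOrder H π)
    {j k : V} (hj : j ∈ pre π k) (hjk : (j, k) ∉ H) : DSep H {j} {k} ((pre π k).erase j) := by
  have hpre {x : V} : x ∈ pre π k ↔ π.idxOf x < π.idxOf k := hco.1.mem_pre_iff
  intro a ha b hb hab
  rw [Finset.mem_singleton] at ha hb
  subst ha hb
  refine not_dConn_of_parents_mem hH (fun y hy => ?_) (fun c hc hkc => ?_)
    (fun hkj => ?_) hjk hab.symm
  · exact Finset.mem_erase.mpr ⟨fun h => hjk (h ▸ hy), hpre.mpr (hco.2 y b (.single hy))⟩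
  · exact absurd (hpre.mp (Finset.mem_of_mem_erase hc)) (hco.2 b c hkc).asymm
  · exact absurd (hpre.mp hj) (hco.2 b a hkj).asymm

end PermutationOrder

section VermaPearl

variable {V : Type} [DecidableEq V] {I : IndepModel V} {E : EdgeSet V} {π : List V}

theorem isDAG_of_parents_subset_pre (hπ : IsPermList π) (hpa : ∀ v, parents E v ⊆ pre π v) :
    IsDAG E := by
  have hlt : ∀ a b, Relation.TransGen (Adj E) a b → π.idxOf a < π.idxOf b := by
    intro a b hab
    induction hab with
    | single h => exact hπ.mem_pre_iff.mp (hpa _ (mem_parents.mpr h))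
    | tail _ h ih => exact ih.trans (hπ.mem_pre_iff.mp (hpa _ (mem_parents.mpr h)))
  exact fun v hv => lt_irrefl _ (hlt v v hv)

theorem markovian_of_orderedMarkov (hI : Semigraphoid I) (h0 : I ∅ ∅ ∅) (hπ : IsPermList π)
    (hpa : ∀ v, parents E v ⊆ pre π v)
    (hom : ∀ v, I {v} (pre π v \ parents E v) (parents E v)) :
    Markovian E I := by
  have hE : IsDAG E := isDAG_of_parents_subset_pre hπ hpa
  -- induction over the prefixes of `π`, each new vertex being a sink of the graph built so far
  have key : ∀ m ≤ π.length,
      MarkovianOn (E.filter fun e => π.idxOf e.2 < m) I (π.take m).toFinset := by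
    intro m hm
    induction m with
    | zero =>
      intro A B C hA hB hC _ _
      simp only [List.take_zero, List.toFinset_nil, Finset.subset_empty] at hA hB hC
      rwa [hA, hB, hC]
    | succ m ih =>
      have hm : m < π.length := hm
      set E' := E.filter fun e => π.idxOf e.2 < m + 1
      have hv : π.idxOf π[m] = m := hπ.1.idxOf_getElem m hm
      have hE' : IsDAG E' := hE.anti (Finset.filter_subset _ E)
      have hpa' : parents E' π[m] = parents E π[m] := by
        ext j; simp [mem_parents, Adj, E', hv]
      have hsink : ∀ w, ¬ Adj E' π[m] w := by
        intro w hw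
        simp only [Adj, Finset.mem_filter, E'] at hw
        have := hπ.mem_pre_iff.mp (hpa w (mem_parents.mpr hw.1))
        omega
      rw [toFinset_take_succ hm]
      refine ((ih hm.le).mono ?_ hE').insert_sink hI hE' ?_ ?_ hsink
      · exact Finset.monotone_filter_right _ fun _ _ h => Nat.lt_succ_of_lt h
      · rw [hpa', ← hπ.pre_getElem hm]; exact hpa _
      · rw [hpa', ← hπ.pre_getElem hm]; exact hom _
  intro A B C hABC hd
  have hall (X : Finset V) : X ⊆ (π.take π.length).toFinset := fun x _ => by simpa using hπ.2 x
  refine key π.length le_rfl A B C (hall A) (hall B) (hall C) hABC ?_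
  rwa [Finset.filter_true_of_mem fun e _ => List.idxOf_lt_length_of_mem (hπ.2 e.2)]

end VermaPearl

section RUConstruction

variable {V : Type} [Fintype V] [DecidableEq V] {I : IndepModel V} {π : List V}

theorem mem_RUedges {j k : V} :
    (j, k) ∈ RUedges I π ↔ j ∈ pre π k ∧ ¬ I {j} {k} ((pre π k).erase j) := by
  simp [RUedges]

theorem parents_RUedges_subset_pre (v : V) : parents (RUedges I π) v ⊆ pre π v :=
  fun _ hj => (mem_RUedges.mp (mem_parents.mp hj)).1

theorem isDAG_RUedges (hπ : IsPermList π) : IsDAG (RUedges I π) :=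
  isDAG_of_parents_subset_pre hπ parents_RUedges_subset_pre

theorem Graphoid.orderedMarkov_RUedges (hI : Graphoid I) {v : V} (h0 : I {v} ∅ (pre π v)) :
    I {v} (pre π v \ parents (RUedges I π) v) (parents (RUedges I π) v) := by
  have := hI.indep_sdiff_of_forall_mem Finset.sdiff_subset h0 fun j hj => by
    obtain ⟨hjv, hnot⟩ := Finset.mem_sdiff.mp hj
    have : I {j} {v} ((pre π v).erase j) := by
      by_contra h
      exact hnot (mem_parents.mpr (mem_RUedges.mpr ⟨hjv, h⟩))
    exact hI.symm _ _ _ this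
  rwa [Finset.sdiff_sdiff_eq_self (parents_RUedges_subset_pre v)] at this

theorem Graphoid.markovian_RUedges (hI : Graphoid I) (h0 : ∀ A C, Disjoint A C → I A ∅ C)
    (hπ : IsPermList π) : Markovian (RUedges I π) I :=
  markovian_of_orderedMarkov hI.toSemigraphoid (h0 ∅ ∅ (Finset.disjoint_empty_left ∅)) hπ
    parents_RUedges_subset_pre fun v =>
      hI.orderedMarkov_RUedges (h0 _ _ (Finset.disjoint_singleton_left.mpr (notMem_pre_self π v)))

theorem RUedges_subset_of_causalOrder {H : EdgeSet V} (hH : IsDAG H) (hmk : Markovian H I)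
    (hco : CausalOrder H π) : RUedges I π ⊆ H := by
  rintro ⟨j, k⟩ hjk
  obtain ⟨hj, hdep⟩ := mem_RUedges.mp hjk
  by_contra hH'
  have hk : k ∉ pre π k := notMem_pre_self π k
  refine hdep (hmk _ _ _ ⟨?_, ?_, ?_⟩ (hco.dSep_pre_erase hH hj hH'))
  · exact Finset.disjoint_singleton.mpr fun h => hk (h ▸ hj)
  · exact Finset.disjoint_singleton_left.mpr (Finset.notMem_erase j _)
  · exact Finset.disjoint_singleton_left.mpr fun h => hk (Finset.mem_of_mem_erase h)

end RUConstruction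

/-- if `π` is a causal order of a Markovian DAG `H`, then the RU-induced
DAG `G_π` is a subgraph of `H`; if moreover `H` is SGS-minimal, `G_π = H`. -/
theorem RU_subset_of_causal_order (I : IndepModel V) (hG : Graphoid I)
    (H : EdgeSet V) (hdag : IsDAG H) (hmk : Markovian H I)
    (π : List V) (hco : CausalOrder H π) :
    RUedges I π ⊆ H ∧ (H ∈ SGSmin I → RUedges I π = H) := by
  have hsub : RUedges I π ⊆ H := RUedges_subset_of_causalOrder hdag hmk hco
  refine ⟨hsub, fun hmin => hmin.2 _ hsub ⟨isDAG_RUedges hco.1, ?_⟩⟩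
  exact hG.markovian_RUedges (fun _ _ => hmk.indep_empty) hco.1
end

section
/- Let P be a graphoid over V, let π be a permutation, and suppose j → k is a covered edge in the induced DAG G_π, with π = ⟨δ₁, j, δ₂, k, δ₃⟩. Then the permutation τ = ⟨δ₁, j, k, δ₂, δ₃⟩ (moving k to immediately after j) induces the same DAG: G_π = G_τ. -/
open Classical
attribute [local instance] Classical.propDecidable

variable {V : Type} [Fintype V] [DecidableEq V]

/-!
Write `A = δ₁ ++ [j]`. Because `j → k` is covered, every parent of `k` lies in `A`, so each
`v ∈ δ₂` satisfies `k ⊥ v | pre π k \ {v}`, and the intersection axiom assembles these into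
`k ⊥ δ₂ | A`. Moving `k` in front of `δ₂` changes the predecessor set of `k` (it loses `δ₂`) and
of each `b ∈ δ₂` (it gains `k`); in both cases the block `W` that is added to the smaller
predecessor set `P` satisfies `b ⊥ W | P`, and for such a block contraction with weak union,
resp. intersection with decomposition, give `a ⊥ b | (P \ {a}) ∪ W ↔ a ⊥ b | P \ {a}`.
So no vertex changes its RU parents.
-/

section ListPre

variable {V : Type} [DecidableEq V]

lemma pre_cons_self (b : V) (l : List V) : pre (b :: l) b = ∅ := by
  simp [pre]

lemma pre_cons_of_ne {a b : V} (l : List V) (hab : a ≠ b) :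
    pre (a :: l) b = insert a (pre l b) := by
  simp [pre, hab]

lemma pre_subset_toFinset (l : List V) (b : V) : pre l b ⊆ l.toFinset := by
  intro x hx
  simp only [pre, List.mem_toFinset] at hx ⊢
  exact (List.takeWhile_sublist _).subset hx

lemma pre_append_of_mem {b : V} {l₁ : List V} (l₂ : List V) (hb : b ∈ l₁) :
    pre (l₁ ++ l₂) b = pre l₁ b := by
  induction l₁ with
  | nil => simp at hb
  | cons a l ih =>
    rcases eq_or_ne a b with rfl | hab
    · simp only [List.cons_append, pre_cons_self]
    · rw [List.cons_append, pre_cons_of_ne _ hab, pre_cons_of_ne _ hab,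
        ih ((List.mem_cons.1 hb).resolve_left hab.symm)]

lemma pre_append_of_notMem {b : V} {l₁ : List V} (l₂ : List V) (hb : b ∉ l₁) :
    pre (l₁ ++ l₂) b = l₁.toFinset ∪ pre l₂ b := by
  induction l₁ with
  | nil => simp
  | cons a l ih =>
    rw [List.mem_cons, not_or] at hb
    rw [List.cons_append, pre_cons_of_ne _ (Ne.symm hb.1), ih hb.2, List.toFinset_cons,
      Finset.insert_union]

lemma pre_append_cons_self {b : V} {l₁ : List V} (l₂ : List V) (hb : b ∉ l₁) :
    pre (l₁ ++ b :: l₂) b = l₁.toFinset := by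
  rw [pre_append_of_notMem _ hb, pre_cons_self, Finset.union_empty]

lemma pre_append_cons_self_of_nodup {b : V} {l₁ l₂ : List V} (h : (l₁ ++ b :: l₂).Nodup) :
    pre (l₁ ++ b :: l₂) b = l₁.toFinset :=
  pre_append_cons_self _ fun hb => (List.nodup_append.1 h).2.2 b hb b List.mem_cons_self rfl

lemma pre_move_of_ne (l₁ l₂ l₃ : List V) {a b : V} (hab : a ≠ b) (hb : b ∉ l₂) :
    pre (l₁ ++ l₂ ++ a :: l₃) b = pre (l₁ ++ a :: (l₂ ++ l₃)) b := by
  by_cases hb₁ : b ∈ l₁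
  · rw [List.append_assoc, pre_append_of_mem _ hb₁, pre_append_of_mem _ hb₁]
  · rw [List.append_assoc, pre_append_of_notMem _ hb₁, pre_append_of_notMem _ hb₁,
      pre_append_of_notMem _ hb, pre_cons_of_ne _ hab, pre_cons_of_ne _ hab,
      pre_append_of_notMem _ hb, Finset.union_insert]

end ListPre

namespace Semigraphoid

variable {V : Type} [DecidableEq V] {I : IndepModel V}

lemma indep_comm (hI : Semigraphoid I) {A B C : Finset V} : I A B C ↔ I B A C :=
  ⟨hI.symm _ _ _, hI.symm _ _ _⟩

lemma indep_of_union_subset (hI : Semigraphoid I) {A B B' S C : Finset V}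
    (h : I A B C) (hsub : B' ∪ S ⊆ B) : I A B' (C ∪ S) := by
  have hB : B' ∪ (B \ (B' ∪ S)) ∪ S = B := by
    ext x
    have := @hsub x
    simp only [Finset.mem_union, Finset.mem_sdiff] at this ⊢
    tauto
  rw [← hB] at h
  exact (hI.decomposition _ _ _ _ (hI.weakUnion _ _ _ _ h)).1

end Semigraphoid

namespace Graphoid

variable {V : Type} [DecidableEq V] {I : IndepModel V}

lemma indep_union_cond_iff (hI : Graphoid I) {A B W C : Finset V} (h : I A W (C ∪ B)) :
    I A B (C ∪ W) ↔ I A B C :=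
  ⟨fun hB => (hI.decomposition _ _ _ _ (hI.intersection _ _ _ _ hB h)).1,
    fun hB => hI.weakUnion _ _ _ _ (hI.contraction _ _ _ _ hB h)⟩

lemma indep_of_forall_indep_singleton (hI : Graphoid I) {A P S : Finset V}
    (hS : S.Nonempty) (hSP : S ⊆ P) (h : ∀ v ∈ S, I A {v} (P \ {v})) : I A S (P \ S) := by
  induction hS using Finset.Nonempty.cons_induction with
  | singleton a => exact h a (Finset.mem_singleton_self a)
  | cons a s ha _ ih =>
    have hsP : s ⊆ P := (Finset.subset_cons ha).trans hSP
    have haP : a ∈ P := hSP (Finset.mem_cons_self a s)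
    have hs := ih hsP fun v hv => h v (Finset.mem_cons_of_mem hv)
    have hsa : (P \ (s ∪ {a})) ∪ {a} = P \ s := by
      ext x; have := @hsP x
      simp only [Finset.mem_union, Finset.mem_sdiff, Finset.mem_singleton] at this ⊢
      grind
    have has : (P \ (s ∪ {a})) ∪ s = P \ {a} := by
      ext x; have := @hsP x
      simp only [Finset.mem_union, Finset.mem_sdiff, Finset.mem_singleton] at this ⊢
      grind
    rw [Finset.cons_eq_insert, Finset.insert_eq, Finset.union_comm]
    exact hI.intersection _ _ _ _ (hsa ▸ hs) (has ▸ h a (Finset.mem_cons_self a s))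

end Graphoid

section RUParent

variable {V : Type} [DecidableEq V]

def IsRUParent (I : IndepModel V) (P : Finset V) (a b : V) : Prop :=
  a ∈ P ∧ ¬ I {a} {b} (P.erase a)

lemma Graphoid.isRUParent_union_iff {I : IndepModel V} (hI : Graphoid I) {P W : Finset V}
    {a b : V} (hPW : Disjoint P W) (hW : I {b} W P) :
    IsRUParent I (P ∪ W) a b ↔ IsRUParent I P a b := by
  unfold IsRUParent
  by_cases haW : a ∈ W
  · have haP : a ∉ P := Finset.disjoint_right.1 hPW haW
    have hind : I {b} {a} (P ∪ W.erase a) := hI.indep_of_union_subset hW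
      (Finset.union_subset (Finset.singleton_subset_iff.2 haW) (Finset.erase_subset a W))
    rw [Finset.erase_union_distrib, Finset.erase_eq_of_notMem haP]
    simp [haP, hI.symm _ _ _ hind]
  by_cases haP : a ∈ P
  · have hW' : I {b} W (P.erase a ∪ {a}) := by
      rwa [Finset.union_comm, ← Finset.insert_eq, Finset.insert_erase haP]
    rw [Finset.erase_union_distrib, Finset.erase_eq_of_notMem haW, hI.indep_comm,
      hI.toSemigraphoid.indep_comm (A := {a}), hI.indep_union_cond_iff hW']
    simp [haP]
  · simp [haP, haW]

lemma mem_parents_s5 {E : EdgeSet V} {a b : V} : a ∈ parents E b ↔ (a, b) ∈ E := by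
  simp [parents]

lemma CoveredEdge.parents_subset {E : EdgeSet V} {j k : V} (h : CoveredEdge E j k) :
    parents E k ⊆ insert j (parents E j) := by
  rw [h.2]
  exact Finset.insert_erase_subset j _

end RUParent

lemma mem_RUedges_s5 {I : IndepModel V} {π : List V} {a b : V} :
    (a, b) ∈ RUedges I π ↔ IsRUParent I (pre π b) a b := by
  simp [RUedges, IsRUParent]

lemma parents_RUedges_subset {I : IndepModel V} {π : List V} {b : V} :
    parents (RUedges I π) b ⊆ pre π b :=
  fun _ ha => (mem_RUedges_s5.1 (mem_parents_s5.1 ha)).1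

lemma Graphoid.RUedges_move_eq {I : IndepModel V} (hI : Graphoid I) {A δ₂ δ₃ : List V} {k : V}
    (hnd : (A ++ δ₂ ++ k :: δ₃).Nodup) (hind : I {k} δ₂.toFinset A.toFinset) :
    RUedges I (A ++ δ₂ ++ k :: δ₃) = RUedges I (A ++ k :: (δ₂ ++ δ₃)) := by
  have hkAδ : k ∉ A ++ δ₂ := fun h =>
    (List.nodup_append.1 hnd).2.2 k h k List.mem_cons_self rfl
  have hAδ : A.Disjoint δ₂ := List.disjoint_of_nodup_append hnd.of_append_left
  ext ⟨a, b⟩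
  simp only [mem_RUedges_s5]
  by_cases hbk : b = k
  · subst hbk
    rw [pre_append_cons_self _ hkAδ, List.toFinset_append,
      pre_append_cons_self _ fun h => hkAδ (List.mem_append_left δ₂ h)]
    exact hI.isRUParent_union_iff (List.disjoint_toFinset_iff_disjoint.2 hAδ) hind
  by_cases hb : b ∈ δ₂
  · have hbA : b ∉ A := fun h => hAδ h hb
    rw [List.append_assoc, pre_append_of_notMem _ hbA, pre_append_of_mem _ hb,
      pre_append_of_notMem _ hbA, pre_cons_of_ne _ (Ne.symm hbk), pre_append_of_mem _ hb,
      Finset.union_insert, Finset.insert_eq, Finset.union_comm {k}]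
    refine (hI.isRUParent_union_iff ?_ ?_).symm
    · simp only [Finset.disjoint_singleton_right, Finset.mem_union, List.mem_toFinset, not_or]
      exact ⟨fun h => hkAδ (List.mem_append_left δ₂ h),
        fun h => hkAδ (List.mem_append_right A (List.mem_toFinset.1 (pre_subset_toFinset δ₂ b h)))⟩
    · refine hI.symm _ _ _ (hI.indep_of_union_subset hind (Finset.union_subset ?_ ?_))
      · simpa using hb
      · exact pre_subset_toFinset δ₂ b
  · rw [pre_move_of_ne _ _ _ (Ne.symm hbk) hb]

lemma Semigraphoid.indep_of_notMem_parents_RUedges {I : IndepModel V} (hI : Semigraphoid I)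
    {π : List V} {v k : V} (hv : v ∈ pre π k) (hvk : v ∉ parents (RUedges I π) k) :
    I {k} {v} (pre π k \ {v}) := by
  rw [mem_parents_s5, mem_RUedges_s5, IsRUParent, not_and, not_not] at hvk
  rw [← Finset.erase_eq]
  exact hI.symm _ _ _ (hvk hv)

lemma Graphoid.indep_of_coveredEdge {I : IndepModel V} (hI : Graphoid I) {π : List V} {j k : V}
    (hcov : CoveredEdge (RUedges I π) j k) {D : Finset V} (hD : D.Nonempty)
    (hDk : D ⊆ pre π k) (hDj : Disjoint D (insert j (pre π j))) :
    I {k} D (pre π k \ D) :=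
  hI.indep_of_forall_indep_singleton hD hDk fun _ hv =>
    hI.indep_of_notMem_parents_RUedges (hDk hv) fun hvk => Finset.disjoint_left.1 hDj hv
      (Finset.insert_subset_insert j parents_RUedges_subset (hcov.parents_subset hvk))

/-- if `j → k` is covered in `G_π` with `π = δ₁ ++ j :: δ₂ ++ k :: δ₃`,
then moving `k` to immediately after `j` induces the same DAG. -/
theorem covered_move_preserves (I : IndepModel V) (hG : Graphoid I)
    (j k : V) (δ₁ δ₂ δ₃ : List V) (π τ : List V)
    (hπ : π = δ₁ ++ j :: (δ₂ ++ k :: δ₃))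
    (hτ : τ = δ₁ ++ j :: k :: (δ₂ ++ δ₃))
    (hperm : IsPermList π)
    (hcov : CoveredEdge (RUedges I π) j k) :
    RUedges I π = RUedges I τ := by
  obtain rfl | hδ₂ := eq_or_ne δ₂ []
  · simp [hπ, hτ]
  have hπA : π = δ₁ ++ [j] ++ δ₂ ++ k :: δ₃ := by simp [hπ]
  have hnd : (δ₁ ++ [j] ++ δ₂ ++ k :: δ₃).Nodup := hπA ▸ hperm.1
  have hAδ : Disjoint (δ₁ ++ [j]).toFinset δ₂.toFinset :=
    List.disjoint_toFinset_iff_disjoint.2 (List.disjoint_of_nodup_append hnd.of_append_left)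
  have hprek : pre π k = (δ₁ ++ [j]).toFinset ∪ δ₂.toFinset := by
    rw [hπA, pre_append_cons_self_of_nodup hnd, List.toFinset_append]
  have hprej : insert j (pre π j) = (δ₁ ++ [j]).toFinset := by
    rw [hπ, pre_append_cons_self_of_nodup (hπ ▸ hperm.1)]
    ext; simp
  have hind := hG.indep_of_coveredEdge hcov (D := δ₂.toFinset) (by simpa using hδ₂)
    (hprek ▸ Finset.subset_union_right) (hprej ▸ hAδ.symm)
  rw [hprek, Finset.union_sdiff_cancel_right hAδ] at hind
  rw [hπA, hG.RUedges_move_eq hnd hind, hτ]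
  simp
end

section
/- Let P be a joint probability distribution (independence model) over V. Then the set of faithful DAGs CFC(P) equals the set of uniquely P-minimal DAGs uPm(P); that is, a DAG G is Markovian and faithful to P (I(G) = I(P), i.e. I(G) ⊆ I(P) and I(P) ⊆ I(G)) if and only if G is P-minimal and every P-minimal DAG is Markov equivalent to G. -/
open Classical
attribute [local instance] Classical.propDecidable

variable {V : Type} [Fintype V] [DecidableEq V]

set_option linter.unusedSectionVars false
section AuxCFCuPm

variable {V : Type} [Fintype V] [DecidableEq V]

lemma isub_refl' (E : EdgeSet V) : ISub E E := fun _ _ _ _ h => h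

lemma isub_trans' {E₁ E₂ E₃ : EdgeSet V} (h1 : ISub E₁ E₂) (h2 : ISub E₂ E₃) : ISub E₁ E₃ :=
  fun A B C hd hs => h2 A B C hd (h1 A B C hd hs)

noncomputable def sepSet (E : EdgeSet V) : Finset (Finset V × Finset V × Finset V) :=
  Finset.univ.filter (fun t => PairwiseDisjoint3 t.1 t.2.1 t.2.2 ∧ DSep E t.1 t.2.1 t.2.2)

lemma isub_iff_sepSet {E E' : EdgeSet V} : ISub E E' ↔ sepSet E ⊆ sepSet E' := by
  constructor
  · intro h t ht
    simp only [sepSet, Finset.mem_filter, Finset.mem_univ, true_and] at ht ⊢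
    exact ⟨ht.1, h _ _ _ ht.1 ht.2⟩
  · intro h A B C hd hs
    have hmem : (A, B, C) ∈ sepSet E := by
      simp only [sepSet, Finset.mem_filter, Finset.mem_univ, true_and]
      exact ⟨hd, hs⟩
    have := h hmem
    simp only [sepSet, Finset.mem_filter, Finset.mem_univ, true_and] at this
    exact this.2

lemma exists_pm {I : IndepModel V} {H : EdgeSet V} (hH : H ∈ CMC I) :
    ∃ H', H' ∈ Pm I ∧ ISub H H' := by
  classical
  set T : Finset (EdgeSet V) := Finset.univ.filter (fun K => K ∈ CMC I ∧ ISub H K) with hT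
  have hHT : H ∈ T := by
    simp only [hT, Finset.mem_filter, Finset.mem_univ, true_and]
    exact ⟨hH, isub_refl' H⟩
  obtain ⟨H', hH'T, hmax⟩ := Finset.exists_max_image T (fun K => (sepSet K).card) ⟨H, hHT⟩
  simp only [hT, Finset.mem_filter, Finset.mem_univ, true_and] at hH'T
  refine ⟨H', ⟨hH'T.1, ?_⟩, hH'T.2⟩
  intro G' hG' hsub
  have hG'T : G' ∈ T := by
    simp only [hT, Finset.mem_filter, Finset.mem_univ, true_and]
    exact ⟨hG', isub_trans' hH'T.2 hsub⟩
  have hcard := hmax G' hG'T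
  have heq : sepSet H' = sepSet G' :=
    Finset.eq_of_subset_of_card_le (isub_iff_sepSet.mp hsub) hcard
  exact isub_iff_sepSet.mpr (le_of_eq heq.symm)

lemma indep_pair {I : IndepModel V} (hsg : Semigraphoid I) {A B C : Finset V} {a b : V}
    (ha : a ∈ A) (hb : b ∈ B) (hI : I A B C) : I {a} {b} C := by
  have hB : ({b} : Finset V) ∪ B.erase b = B := by
    rw [← Finset.insert_eq, Finset.insert_erase hb]
  have h1 : I A {b} C := (hsg.decomposition A {b} (B.erase b) C (by rwa [hB])).1
  have h2 : I {b} A C := hsg.symm _ _ _ h1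
  have hA : ({a} : Finset V) ∪ A.erase a = A := by
    rw [← Finset.insert_eq, Finset.insert_erase ha]
  have h3 : I {b} {a} C := (hsg.decomposition {b} {a} (A.erase a) C (by rwa [hA])).1
  exact hsg.symm _ _ _ h3

/-- vertex class: C first, then `a`, then `b`, then the rest. -/
noncomputable def clsF (C : Finset V) (a b v : V) : ℕ :=
  if v ∈ C then 0 else if v = a then 1 else if v = b then 2 else 3

noncomputable def fOrd (C : Finset V) (a b v : V) : ℕ :=
  clsF C a b v * Fintype.card V + (Fintype.equivFin V v : ℕ)

lemma fIdx_lt (v : V) : ((Fintype.equivFin V) v : ℕ) < Fintype.card V :=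
  ((Fintype.equivFin V) v).isLt

lemma fOrd_lt_of_cls {C : Finset V} {a b x y : V}
    (h : clsF C a b x < clsF C a b y) : fOrd C a b x < fOrd C a b y := by
  have hx := fIdx_lt x
  have hmul : (clsF C a b x + 1) * Fintype.card V ≤ clsF C a b y * Fintype.card V :=
    Nat.mul_le_mul_right _ h
  rw [Nat.succ_mul] at hmul
  unfold fOrd
  omega

lemma fOrd_inj {C : Finset V} {a b x y : V} (h : fOrd C a b x = fOrd C a b y) : x = y := by
  have hcls : clsF C a b x = clsF C a b y := by
    rcases lt_trichotomy (clsF C a b x) (clsF C a b y) with h' | h' | h'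
    · exact absurd h (fOrd_lt_of_cls h').ne
    · exact h'
    · exact absurd h.symm (fOrd_lt_of_cls h').ne
  unfold fOrd at h
  rw [hcls] at h
  have : ((Fintype.equivFin V) x : ℕ) = ((Fintype.equivFin V) y : ℕ) := by omega
  exact (Fintype.equivFin V).injective (Fin.ext this)

/-- complete DAG in `fOrd`-order, minus the edge `(a,b)`. -/
noncomputable def Hgraph (C : Finset V) (a b : V) : EdgeSet V :=
  Finset.univ.filter (fun e => fOrd C a b e.1 < fOrd C a b e.2 ∧ e ≠ (a, b))

lemma adj_Hgraph {C : Finset V} {a b x y : V} :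
    Adj (Hgraph C a b) x y ↔ fOrd C a b x < fOrd C a b y ∧ (x, y) ≠ (a, b) := by
  simp [Adj, Hgraph]

lemma adj_lt {C : Finset V} {a b x y : V} (h : Adj (Hgraph C a b) x y) :
    fOrd C a b x < fOrd C a b y := (adj_Hgraph.mp h).1

lemma rtg_le {C : Finset V} {a b x y : V}
    (h : Relation.ReflTransGen (Adj (Hgraph C a b)) x y) : fOrd C a b x ≤ fOrd C a b y := by
  induction h with
  | refl => exact le_rfl
  | tail _ h2 ih => exact ih.trans (adj_lt h2).le

lemma isDAG_Hgraph (C : Finset V) (a b : V) : IsDAG (Hgraph C a b) := by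
  intro v hv
  have key : ∀ x y : V, Relation.TransGen (Adj (Hgraph C a b)) x y →
      fOrd C a b x < fOrd C a b y := by
    intro x y h
    induction h with
    | single h1 => exact adj_lt h1
    | tail _ h2 ih => exact ih.trans (adj_lt h2)
  exact absurd (key v v hv) (lt_irrefl _)

lemma adj_total {C : Finset V} {a b x y : V} (hxy : x ≠ y)
    (h1 : (x, y) ≠ (a, b)) (h2 : (y, x) ≠ (a, b)) :
    Adj (Hgraph C a b) x y ∨ Adj (Hgraph C a b) y x := by
  rcases lt_trichotomy (fOrd C a b x) (fOrd C a b y) with h | h | h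
  · exact Or.inl (adj_Hgraph.mpr ⟨h, h1⟩)
  · exact absurd (fOrd_inj h) hxy
  · exact Or.inr (adj_Hgraph.mpr ⟨h, h2⟩)

section ClsFacts

variable {C : Finset V} {a b : V}

lemma cls_a (haC : a ∉ C) : clsF C a b a = 1 := by simp [clsF, haC]

lemma cls_b (hbC : b ∉ C) (hab : a ≠ b) : clsF C a b b = 2 := by
  simp [clsF, hbC, (Ne.symm hab)]

lemma cls_c {c : V} (hc : c ∈ C) : clsF C a b c = 0 := by simp [clsF, hc]

lemma cls_d {v : V} (hvC : v ∉ C) (hva : v ≠ a) (hvb : v ≠ b) : clsF C a b v = 3 := by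
  simp [clsF, hvC, hva, hvb]

lemma fOrd_ab (haC : a ∉ C) (hbC : b ∉ C) (hab : a ≠ b) : fOrd C a b a < fOrd C a b b :=
  fOrd_lt_of_cls (by rw [cls_a haC, cls_b hbC hab]; omega)

lemma fOrd_ca (haC : a ∉ C) {c : V} (hc : c ∈ C) : fOrd C a b c < fOrd C a b a :=
  fOrd_lt_of_cls (by rw [cls_c hc, cls_a haC]; omega)

lemma fOrd_bd (hbC : b ∉ C) (hab : a ≠ b) {v : V} (hvC : v ∉ C) (hva : v ≠ a) (hvb : v ≠ b) :
    fOrd C a b b < fOrd C a b v :=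
  fOrd_lt_of_cls (by rw [cls_b hbC hab, cls_d hvC hva hvb]; omega)

end ClsFacts

lemma dconn_pair {E : EdgeSet V} {C' : Finset V} {x y : V}
    (h : Adj E x y ∨ Adj E y x) : DConn E C' x y := by
  refine ⟨[x, y], by simp, rfl, rfl, ?_, ?_⟩
  · intro i hi
    simp only [List.length_cons, List.length_nil] at hi
    have hi0 : i = 0 := by omega
    subst hi0
    exact h
  · intro i hi
    simp only [List.length_cons, List.length_nil] at hi
    omega

lemma dconn_triple {E : EdgeSet V} {C' : Finset V} {x m y : V}
    (h1 : Adj E x m ∨ Adj E m x) (h2 : Adj E m y ∨ Adj E y m)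
    (h3 : ActiveTriple E C' x m y) : DConn E C' x y := by
  refine ⟨[x, m, y], by simp, rfl, rfl, ?_, ?_⟩
  · intro i hi
    simp only [List.length_cons, List.length_nil] at hi
    have : i = 0 ∨ i = 1 := by omega
    rcases this with rfl | rfl
    · exact h1
    · exact h2
  · intro i hi
    simp only [List.length_cons, List.length_nil] at hi
    have : i = 0 := by omega
    subst this
    exact h3

end AuxCFCuPm


set_option linter.deprecated false
section AuxCFCuPm2

variable {V : Type} [Fintype V] [DecidableEq V]

lemma get_eq_getD {p : List V} {i : ℕ} (h : i < p.length) (d : V) :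
    p.get ⟨i, h⟩ = p.getD i d := by
  rw [List.getD_eq_getElem p d h]; simp

lemma head_get {p : List V} {x : V} (h : p.head? = some x) (hl : 0 < p.length) :
    p.get ⟨0, hl⟩ = x := by
  cases p with
  | nil => simp at hl
  | cons a t => simp only [List.head?_cons, Option.some.injEq] at h; simpa using h

lemma last_get {p : List V} {x : V} (h : p.getLast? = some x) (hl : 0 < p.length) :
    p.get ⟨p.length - 1, by omega⟩ = x := by
  have hne : p ≠ [] := List.length_pos_iff.mp hl
  rw [List.getLast?_eq_getLast hne, Option.some.injEq] at h
  rw [← h, List.getLast_eq_getElem, List.get_eq_getElem]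

/-- The key d-separation: in `Hgraph C a b`, `a` and `b` are d-separated by `C`. -/
lemma dsep_Hgraph {C : Finset V} {a b : V} (haC : a ∉ C) (hbC : b ∉ C) (hab : a ≠ b) :
    DSep (Hgraph C a b) {a} {b} C := by
  intro x hx y hy hconn
  rw [Finset.mem_singleton] at hx hy
  rw [hx, hy] at hconn
  clear hx hy
  obtain ⟨p, hlen, hhead, hlast, hedge, htri⟩ := hconn
  have hfab : fOrd C a b a < fOrd C a b b := fOrd_ab haC hbC hab
  have h0 : p.getD 0 a = a := by
    rw [← get_eq_getD (by omega) a]; exact head_get hhead (by omega)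
  have hlastg : p.getD (p.length - 1) a = b := by
    rw [← get_eq_getD (by omega) a]; exact last_get hlast (by omega)
  have hedge0 := hedge 0 (by omega)
  rw [get_eq_getD _ a, get_eq_getD _ a, h0] at hedge0
  set v1 := p.getD 1 a with hv1def
  rcases hedge0 with hav | hva
  · -- `a → v1`, so `v1` is after `b`; use the maximum of the path
    have hv1b : v1 ≠ b := by
      intro h
      exact (adj_Hgraph.mp hav).2 (by rw [h])
    have hflt : fOrd C a b a < fOrd C a b v1 := adj_lt hav
    have hv1C : v1 ∉ C := fun hc => absurd (fOrd_ca (b := b) haC hc) (by omega)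
    have hv1a : v1 ≠ a := fun h => by rw [h] at hflt; omega
    have hfbv1 : fOrd C a b b < fOrd C a b v1 := fOrd_bd hbC hab hv1C hv1a hv1b
    set g : ℕ → ℕ := fun i => fOrd C a b (p.getD i a) with hg
    obtain ⟨i, hiR, hmax⟩ := Finset.exists_max_image (Finset.range p.length) g
      ⟨0, by simp; omega⟩
    rw [Finset.mem_range] at hiR
    have hg1 : g 1 ≤ g i := hmax 1 (by rw [Finset.mem_range]; omega)
    have hg0 : g 0 = fOrd C a b a := by rw [hg]; simp only [h0]
    have hglast : g (p.length - 1) = fOrd C a b b := by rw [hg]; simp only [hlastg]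
    have hgv1 : g 1 = fOrd C a b v1 := rfl
    have hi0 : i ≠ 0 := by intro h; rw [h, hg0] at hg1; rw [hgv1] at hg1; omega
    have hilast : i ≠ p.length - 1 := by
      intro h
      have h2 : g i = fOrd C a b b := by rw [h, hglast]
      rw [hgv1] at hg1
      omega
    have hi1 : 1 ≤ i := by omega
    have hi2 : i + 1 < p.length := by omega
    -- both neighbours point into `p[i]`
    have hedgeL := hedge (i - 1) (by omega)
    rw [get_eq_getD _ a, get_eq_getD _ a, show i - 1 + 1 = i from by omega] at hedgeL
    have hL : Adj (Hgraph C a b) (p.getD (i - 1) a) (p.getD i a) := by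
      rcases hedgeL with h | h
      · exact h
      · exfalso
        have h1 : g i < g (i - 1) := adj_lt h
        have h2 : g (i - 1) ≤ g i := hmax (i - 1) (by rw [Finset.mem_range]; omega)
        omega
    have hedgeR := hedge i (by omega)
    rw [get_eq_getD _ a, get_eq_getD _ a] at hedgeR
    have hR : Adj (Hgraph C a b) (p.getD (i + 1) a) (p.getD i a) := by
      rcases hedgeR with h | h
      · exfalso
        have h1 : g i < g (i + 1) := adj_lt h
        have h2 : g (i + 1) ≤ g i := hmax (i + 1) (by rw [Finset.mem_range]; omega)
        omega
      · exact h
    have htriple := htri (i - 1) (by omega)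
    rw [get_eq_getD _ a, get_eq_getD _ a, get_eq_getD _ a,
      show i - 1 + 1 = i from by omega, show i - 1 + 2 = i + 1 from by omega] at htriple
    rcases htriple with ⟨_, d, hdC, hreach⟩ | ⟨hnc, _⟩
    · have h1 : fOrd C a b (p.getD i a) ≤ fOrd C a b d := rtg_le hreach
      have h2 : fOrd C a b d < fOrd C a b a := fOrd_ca haC hdC
      have h3 : g 1 ≤ g i := hg1
      rw [hgv1] at h3
      have : g i = fOrd C a b (p.getD i a) := rfl
      omega
    · exact hnc ⟨hL, hR⟩
  · -- `v1 → a`, so `v1 ∈ C`, and the first triple is blocked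
    have hflt : fOrd C a b v1 < fOrd C a b a := adj_lt hva
    have hv1C : v1 ∈ C := by
      by_contra hc
      have hv1a : v1 ≠ a := fun h => by rw [h] at hflt; omega
      have hv1b : v1 ≠ b := fun h => by rw [h] at hflt; omega
      have := fOrd_bd hbC hab hc hv1a hv1b
      omega
    have hlen3 : 2 < p.length := by
      rcases Nat.lt_or_ge 2 p.length with h | h
      · exact h
      · exfalso
        have hpl : p.length = 2 := by omega
        have : v1 = b := by rw [hv1def, ← hlastg, hpl]
        rw [this] at hv1C; exact hbC hv1C
    have htriple := htri 0 (by omega)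
    rw [get_eq_getD _ a, get_eq_getD _ a, get_eq_getD _ a, h0,
      show (0:ℕ) + 1 = 1 from by omega, ← hv1def] at htriple
    rcases htriple with ⟨⟨hcol, _⟩, _⟩ | ⟨_, hnotin⟩
    · have := adj_lt hcol; omega
    · exact hnotin hv1C

/-- If the conditioning set differs from `C`, then `a` and `b` are d-connected. -/
lemma dconn_Hgraph_ne {C : Finset V} {a b : V} (haC : a ∉ C) (hbC : b ∉ C) (hab : a ≠ b)
    {C' : Finset V} (haC' : a ∉ C') (hbC' : b ∉ C') (hne : C' ≠ C) :
    DConn (Hgraph C a b) C' a b ∧ DConn (Hgraph C a b) C' b a := by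
  have hfab : fOrd C a b a < fOrd C a b b := fOrd_ab haC hbC hab
  by_cases hsub : C ⊆ C'
  · -- some `w ∈ C' \ C`, necessarily of the last class; collider path `a → w ← b`
    have hss : C ⊂ C' := ⟨hsub, fun h => hne (subset_antisymm h hsub)⟩
    obtain ⟨w, hwC', hwC⟩ := Finset.exists_of_ssubset hss
    have hwa : w ≠ a := fun h => haC' (h ▸ hwC')
    have hwb : w ≠ b := fun h => hbC' (h ▸ hwC')
    have hfw : fOrd C a b b < fOrd C a b w := fOrd_bd hbC hab hwC hwa hwb
    have haw : Adj (Hgraph C a b) a w := adj_Hgraph.mpr ⟨by omega, by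
      simp only [ne_eq, Prod.mk.injEq, not_and]; intro _; exact hwb⟩
    have hbw : Adj (Hgraph C a b) b w := adj_Hgraph.mpr ⟨hfw, by
      simp only [ne_eq, Prod.mk.injEq, not_and]; intro h; exact absurd h.symm hab⟩
    have hact1 : ActiveTriple (Hgraph C a b) C' a w b :=
      Or.inl ⟨⟨haw, hbw⟩, w, hwC', Relation.ReflTransGen.refl⟩
    have hact2 : ActiveTriple (Hgraph C a b) C' b w a :=
      Or.inl ⟨⟨hbw, haw⟩, w, hwC', Relation.ReflTransGen.refl⟩
    exact ⟨dconn_triple (Or.inl haw) (Or.inr hbw) hact1,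
      dconn_triple (Or.inl hbw) (Or.inr haw) hact2⟩
  · -- some `c ∈ C \ C'`; common-cause path `a ← c → b`, non-collider not conditioned
    obtain ⟨c, hcC, hcC'⟩ := Finset.not_subset.mp hsub
    have hca' : c ≠ a := fun h => haC (h ▸ hcC)
    have hfc : fOrd C a b c < fOrd C a b a := fOrd_ca haC hcC
    have hca : Adj (Hgraph C a b) c a := adj_Hgraph.mpr ⟨hfc, by
      simp only [ne_eq, Prod.mk.injEq, not_and]; intro h; exact absurd h hca'⟩
    have hcb : Adj (Hgraph C a b) c b := adj_Hgraph.mpr ⟨by omega, by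
      simp only [ne_eq, Prod.mk.injEq, not_and]; intro h; exact absurd h hca'⟩
    have hnc1 : ¬ IsCollider (Hgraph C a b) a c b := by
      rintro ⟨h1, _⟩; have := adj_lt h1; omega
    have hnc2 : ¬ IsCollider (Hgraph C a b) b c a := by
      rintro ⟨h1, _⟩; have := adj_lt h1; omega
    exact ⟨dconn_triple (Or.inr hca) (Or.inl hcb) (Or.inr ⟨hnc1, hcC'⟩),
      dconn_triple (Or.inr hcb) (Or.inl hca) (Or.inr ⟨hnc2, hcC'⟩)⟩

lemma markov_Hgraph {I : IndepModel V} {C : Finset V} {a b : V}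
    (haC : a ∉ C) (hbC : b ∉ C) (hab : a ≠ b)
    (hIab : I {a} {b} C) (hIba : I {b} {a} C)
    (htriv : ∀ A' B' C', PairwiseDisjoint3 A' B' C' → A' = ∅ ∨ B' = ∅ → I A' B' C') :
    Markovian (Hgraph C a b) I := by
  intro A' B' C' hdisj hsep
  rcases A'.eq_empty_or_nonempty with rfl | ⟨x, hx⟩
  · exact htriv _ _ _ hdisj (Or.inl rfl)
  rcases B'.eq_empty_or_nonempty with rfl | ⟨y, hy⟩
  · exact htriv _ _ _ hdisj (Or.inr rfl)
  have hpair : ∀ u ∈ A', ∀ v ∈ B', (u = a ∧ v = b) ∨ (u = b ∧ v = a) := by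
    intro u hu v hv
    have huv : u ≠ v := fun h => Finset.disjoint_left.mp hdisj.1 hu (h ▸ hv)
    by_contra hcon
    push_neg at hcon
    have h1 : (u, v) ≠ (a, b) := by
      intro h; rw [Prod.mk.injEq] at h; exact hcon.1 h.1 h.2
    have h2 : (v, u) ≠ (a, b) := by
      intro h; rw [Prod.mk.injEq] at h; exact hcon.2 h.2 h.1
    exact hsep u hu v hv (dconn_pair (adj_total huv h1 h2))
  rcases hpair x hx y hy with ⟨hxa, hyb⟩ | ⟨hxb, hya⟩
  · have hax : a ∈ A' := hxa ▸ hx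
    have hby : b ∈ B' := hyb ▸ hy
    have hA' : A' = {a} := by
      rw [Finset.eq_singleton_iff_unique_mem]
      refine ⟨hax, fun u hu => ?_⟩
      rcases hpair u hu b hby with ⟨h, _⟩ | ⟨h, h2⟩
      · exact h
      · exact absurd h2.symm hab
    have hB' : B' = {b} := by
      rw [Finset.eq_singleton_iff_unique_mem]
      refine ⟨hby, fun v hv => ?_⟩
      rcases hpair a hax v hv with ⟨_, h⟩ | ⟨h, _⟩
      · exact h
      · exact absurd h hab
    subst hA'; subst hB'
    have haC' : a ∉ C' := Finset.disjoint_left.mp hdisj.2.1 (Finset.mem_singleton_self a)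
    have hbC' : b ∉ C' := Finset.disjoint_left.mp hdisj.2.2 (Finset.mem_singleton_self b)
    by_cases hCC : C' = C
    · rw [hCC]; exact hIab
    · exact absurd ((dconn_Hgraph_ne haC hbC hab haC' hbC' hCC).1)
        (hsep a (Finset.mem_singleton_self a) b (Finset.mem_singleton_self b))
  · have hbx : b ∈ A' := hxb ▸ hx
    have hay : a ∈ B' := hya ▸ hy
    have hA' : A' = {b} := by
      rw [Finset.eq_singleton_iff_unique_mem]
      refine ⟨hbx, fun u hu => ?_⟩
      rcases hpair u hu a hay with ⟨h1, h2⟩ | ⟨h, _⟩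
      · exact absurd h2 hab
      · exact h
    have hB' : B' = {a} := by
      rw [Finset.eq_singleton_iff_unique_mem]
      refine ⟨hay, fun v hv => ?_⟩
      rcases hpair b hbx v hv with ⟨h, _⟩ | ⟨_, h⟩
      · exact absurd h (Ne.symm hab)
      · exact h
    subst hA'; subst hB'
    have hbC' : b ∉ C' := Finset.disjoint_left.mp hdisj.2.1 (Finset.mem_singleton_self b)
    have haC' : a ∉ C' := Finset.disjoint_left.mp hdisj.2.2 (Finset.mem_singleton_self a)
    by_cases hCC : C' = C
    · rw [hCC]; exact hIba
    · exact absurd ((dconn_Hgraph_ne haC hbC hab haC' hbC' hCC).2)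
        (hsep b (Finset.mem_singleton_self b) a (Finset.mem_singleton_self a))

end AuxCFCuPm2

/-- the faithful DAGs are exactly the uniquely P-minimal DAGs. -/
theorem CFC_eq_uPm (I : IndepModel V) (hsg : Semigraphoid I) :
    CFC I = uPm I := by
  ext G
  constructor
  · rintro ⟨hcmc, hfaith⟩
    have hkey : ∀ G' ∈ CMC I, ISub G' G := fun G' hG' A B C hd hs =>
      hfaith A B C hd (hG'.2 A B C hd hs)
    have hPm : G ∈ Pm I := ⟨hcmc, fun G' hG' _ => hkey G' hG'⟩
    exact ⟨hPm, fun G' hG' => ⟨hkey G' hG'.1, hG'.2 G hcmc (hkey G' hG'.1)⟩⟩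
  · rintro ⟨⟨hcmc, _⟩, huniq⟩
    refine ⟨hcmc, ?_⟩
    intro A B C hdisj hI
    by_contra hnsep
    simp only [DSep, not_forall] at hnsep
    push_neg at hnsep
    obtain ⟨a, ha, b, hb, hconn⟩ := hnsep
    have hab : a ≠ b := fun h => Finset.disjoint_left.mp hdisj.1 ha (h ▸ hb)
    have haC : a ∉ C := Finset.disjoint_left.mp hdisj.2.1 ha
    have hbC : b ∉ C := Finset.disjoint_left.mp hdisj.2.2 hb
    have hIab : I {a} {b} C := indep_pair hsg ha hb hI
    have hIba : I {b} {a} C := hsg.symm _ _ _ hIab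
    have htriv : ∀ A' B' C', PairwiseDisjoint3 A' B' C' → A' = ∅ ∨ B' = ∅ → I A' B' C' := by
      intro A' B' C' hd h
      apply hcmc.2 A' B' C' hd
      rcases h with rfl | rfl
      · intro u hu; exact absurd hu (Finset.notMem_empty u)
      · intro u hu v hv; exact absurd hv (Finset.notMem_empty v)
    have hH : Hgraph C a b ∈ CMC I :=
      ⟨isDAG_Hgraph C a b, markov_Hgraph haC hbC hab hIab hIba htriv⟩
    obtain ⟨H', hH'pm, hsubHH'⟩ := exists_pm hH
    have hmeq := huniq H' hH'pm
    have hsub : ISub (Hgraph C a b) G := isub_trans' hsubHH' hmeq.1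
    have hdisj3 : PairwiseDisjoint3 {a} {b} C :=
      ⟨Finset.disjoint_singleton.mpr hab, Finset.disjoint_singleton_left.mpr haC,
        Finset.disjoint_singleton_left.mpr hbC⟩
    have hsepG := hsub {a} {b} C hdisj3 (dsep_Hgraph haC hbC hab)
    exact hsepG a (Finset.mem_singleton_self a) b (Finset.mem_singleton_self b) hconn
end
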